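/- arXiv:1506.08150 — 3 statements merged into one kernel-verified Lean document; each statement's English description precedes it below -/
import Mathlib

section
/- There is an absolute constant C such that for every convex tree 𝒯 of dyadic squares one has ∑_{k∈ℤ} 2^{2k} · #Δ(𝒯_k) ≤ C |R_𝒯|, where #Δ(𝒯_k) is the cardinality of Δ(𝒯_k) and |R_𝒯| is the Lebesgue measure of the root square. -/
/-!
Call a dyadic square an outer child of `𝒯` if it is not in `𝒯` but its parent is. By convexity,
the parent of a square of `𝒯` other than the root is again in `𝒯`, so `T_j` grows with `j`; hence
an outer child of side `2^j` has interior disjoint from `T_j` but contained in `T_l` for `l > j`,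
and the outer children have pairwise disjoint interiors inside `R_𝒯`: their total area is at
most `|R_𝒯|`.

A point `z ∈ ∂T_k` off `∂R_𝒯` is interior to `T_j` for `j = log₂ ℓ(R_𝒯)`; at the first level
`j > k` where `z` becomes interior to `T_j`, some square of side `2^(j-1)` containing `z` lies
outside `𝒯`, is an outer child, and has `z` on its boundary. A square of side `2^l ≥ 2^k` has
at most `8 · 2^(l-k)` points of `2^kℤ × 2^kℤ` on its boundary, so
`2^(2k) #Δ(𝒯_k) ≤ 8 ∑ 2^k ℓ(S)` over the root and the outer children `S` with `ℓ(S) ≥ 2^k`.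
Summing the geometric series in `k` gives the bound with `C = 32`.
-/

open MeasureTheory Set

noncomputable section

/-- The dyadic square with scale parameter `a.1` and position `(a.2.1, a.2.2)`. -/
def dSq (a : ℤ × ℤ × ℤ) : Set (ℝ × ℝ) :=
  Icc ((2:ℝ)^a.1 * (a.2.1 : ℝ)) ((2:ℝ)^a.1 * ((a.2.1 : ℝ) + 1)) ×ˢ
    Icc ((2:ℝ)^a.1 * (a.2.2 : ℝ)) ((2:ℝ)^a.1 * ((a.2.2 : ℝ) + 1))

/-- A convex tree of dyadic squares. -/
structure ConvexTree where
  squares : Finset (ℤ × ℤ × ℤ)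
  root : ℤ × ℤ × ℤ
  root_mem : root ∈ squares
  subset_root : ∀ a ∈ squares, dSq a ⊆ dSq root
  convex : ∀ a b c : ℤ × ℤ × ℤ, a ∈ squares → c ∈ squares →
    dSq a ⊆ dSq b → dSq b ⊆ dSq c → b ∈ squares

/-- `𝒯_k`: parameters of squares of the tree of sidelength `2^k`. -/
def treeLevel (T : ConvexTree) (k : ℤ) : Set (ℤ × ℤ × ℤ) :=
  {a | a ∈ T.squares ∧ a.1 = k}

/-- `T_k`: union of the squares of sidelength `2^k` in the tree. -/
def Tk (T : ConvexTree) (k : ℤ) : Set (ℝ × ℝ) :=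
  ⋃ a ∈ treeLevel T k, dSq a

/-- The Whitney region `Ω_𝒞` in the upper half space. -/
def Omega (C : Set (ℤ × ℤ × ℤ)) : Set ((ℝ × ℝ) × ℝ) :=
  ⋃ a ∈ C, dSq a ×ˢ Icc ((2:ℝ)^a.1 / 2) ((2:ℝ)^a.1)

/-- Euclidean norm on `ℝ²`. -/
def en (z : ℝ × ℝ) : ℝ := Real.sqrt (z.1^2 + z.2^2)

/-- `θ(x,y) = (1+|(x,y)|⁴)⁻¹`. -/
def theta (z : ℝ × ℝ) : ℝ := (1 + en z ^ 4)⁻¹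

/-- `ϑ(x) = (1+|x|)⁻⁴`. -/
def vth (x : ℝ) : ℝ := ((1 + |x|)^4)⁻¹

/-- `F² * [θ]_t (p,q)`. -/
def convTheta (F : ℝ × ℝ → ℝ) (p q t : ℝ) : ℝ :=
  ∫ z : ℝ × ℝ, (F z)^2 * ((t^2)⁻¹ * theta ((p - z.1)/t, (q - z.2)/t))

/-- `M(F, 𝒞)`. -/
def Msize (F : ℝ × ℝ → ℝ) (C : Set (ℤ × ℤ × ℤ)) : ℝ :=
  ⨆ w : Omega C, Real.sqrt (convTheta F w.1.1.1 w.1.1.2 w.1.2)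

/-- `F * [φ₁⊗φ₂⊗φ₃⊗φ₄]_t (p,q,p,q)` where `F` is the entangled product of `F₁,F₂,F₃,F₄`. -/
def entConv (F1 F2 F3 F4 : ℝ × ℝ → ℝ) (φ1 φ2 φ3 φ4 : ℝ → ℝ) (t p q : ℝ) : ℝ :=
  ∫ x : ℝ, ∫ y : ℝ, ∫ x' : ℝ, ∫ y' : ℝ,
    F1 (x, y) * F2 (x', y) * F3 (x', y') * F4 (x, y') *
      (t⁻¹ * φ1 ((p - x)/t)) * (t⁻¹ * φ2 ((q - y)/t)) *
      (t⁻¹ * φ3 ((p - x')/t)) * (t⁻¹ * φ4 ((q - y')/t))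

/-- The local form `Θ^𝒞_{φ₁,φ₂,φ₃,φ₄}`. -/
def Theta (C : Set (ℤ × ℤ × ℤ)) (φ1 φ2 φ3 φ4 : ℝ → ℝ)
    (F1 F2 F3 F4 : ℝ × ℝ → ℝ) : ℝ :=
  ∫ w in Omega C, entConv F1 F2 F3 F4 φ1 φ2 φ3 φ4 w.2 w.1.1 w.1.2 / w.2

/-- Bounded, positive, measurable with finite measure support. -/
def Nice (F : ℝ × ℝ → ℝ) : Prop :=
  Measurable F ∧ (∃ C : ℝ, ∀ z, |F z| ≤ C) ∧
    volume (Function.support F) < ⊤ ∧ ∀ z, 0 ≤ F z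

/-- The lattice `2^kℤ × 2^kℤ`. -/
def latt (k : ℤ) : Set (ℝ × ℝ) :=
  {z | ∃ m n : ℤ, z.1 = (2:ℝ)^k * m ∧ z.2 = (2:ℝ)^k * n}

/-- `Δ(𝒯_k) = ∂T_k ∩ (2^kℤ × 2^kℤ)`. -/
def Delta (T : ConvexTree) (k : ℤ) : Set (ℝ × ℝ) := frontier (Tk T k) ∩ latt k

open Filter Topology

def dyadicInterval (k m : ℤ) : Set ℝ := Icc ((2:ℝ)^k * m) ((2:ℝ)^k * (m + 1))

section DyadicInterval

variable {k j m p : ℤ}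

lemma two_zpow_mul_lt_two_zpow_mul_add_one (k m : ℤ) : (2:ℝ)^k * m < 2^k * (m + 1) := by
  have := zpow_pos (two_pos (α := ℝ)) k
  linarith

lemma dyadicInterval_nonempty (k m : ℤ) : (dyadicInterval k m).Nonempty :=
  nonempty_Icc.2 (two_zpow_mul_lt_two_zpow_mul_add_one k m).le

lemma isClosed_dyadicInterval (k m : ℤ) : IsClosed (dyadicInterval k m) := isClosed_Icc

lemma interior_dyadicInterval (k m : ℤ) :
    interior (dyadicInterval k m) = Ioo ((2:ℝ)^k * m) ((2:ℝ)^k * (m + 1)) := interior_Icc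

lemma closure_interior_dyadicInterval (k m : ℤ) :
    closure (interior (dyadicInterval k m)) = dyadicInterval k m := by
  rw [interior_dyadicInterval, closure_Ioo (two_zpow_mul_lt_two_zpow_mul_add_one k m).ne]
  rfl

lemma volume_dyadicInterval (k m : ℤ) : volume (dyadicInterval k m) = ENNReal.ofReal (2^k) := by
  rw [dyadicInterval, Real.volume_Icc]; ring_nf

lemma two_zpow_add_natCast_mul (k : ℤ) (e : ℕ) (x : ℝ) :
    (2:ℝ)^(k + e) * x = 2^k * (2^e * x) := by
  rw [zpow_add₀ two_ne_zero, zpow_natCast, mul_assoc]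

lemma two_zpow_mul_le_iff {x y : ℤ} : (2:ℝ)^k * x ≤ 2^k * y ↔ x ≤ y := by
  rw [mul_le_mul_iff_of_pos_left (zpow_pos two_pos k)]; exact Int.cast_le

lemma two_zpow_mul_lt_iff {x y : ℤ} : (2:ℝ)^k * x < 2^k * y ↔ x < y := by
  rw [mul_lt_mul_iff_of_pos_left (zpow_pos two_pos k)]; exact Int.cast_lt

lemma two_zpow_mul_mem_dyadicInterval_iff (e : ℕ) :
    (2:ℝ)^k * m ∈ dyadicInterval (k + e) p ↔ 2^e * p ≤ m ∧ m ≤ 2^e * (p + 1) := by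
  simp only [dyadicInterval, mem_Icc, two_zpow_add_natCast_mul]
  rw [← two_zpow_mul_le_iff (k := k), ← two_zpow_mul_le_iff (k := k) (x := m)]
  push_cast
  rfl

lemma dyadicInterval_subset_iff (e : ℕ) :
    dyadicInterval k m ⊆ dyadicInterval (k + e) p ↔ 2^e * p ≤ m ∧ m + 1 ≤ 2^e * (p + 1) := by
  rw [dyadicInterval, dyadicInterval,
    Icc_subset_Icc_iff (two_zpow_mul_lt_two_zpow_mul_add_one k m).le,
    two_zpow_add_natCast_mul, two_zpow_add_natCast_mul,
    ← two_zpow_mul_le_iff (k := k) (x := 2^e * p), ← two_zpow_mul_le_iff (k := k) (x := m + 1)]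
  push_cast
  rfl

lemma le_of_dyadicInterval_subset (h : dyadicInterval k m ⊆ dyadicInterval j p) : k ≤ j := by
  rw [dyadicInterval, dyadicInterval,
    Icc_subset_Icc_iff (two_zpow_mul_lt_two_zpow_mul_add_one k m).le] at h
  have : (2:ℝ)^k ≤ 2^j := by linarith [h.1, h.2]
  exact (zpow_le_zpow_iff_right₀ one_lt_two).1 this

lemma dyadicInterval_subset_parent (k m : ℤ) :
    dyadicInterval k m ⊆ dyadicInterval (k + 1) (m / 2) := by
  have := dyadicInterval_subset_iff (k := k) (m := m) (p := m / 2) 1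
  push_cast at this
  rw [this]
  omega

lemma dyadicInterval_parent_subset (h : dyadicInterval k m ⊆ dyadicInterval j p) (hkj : k < j) :
    dyadicInterval (k + 1) (m / 2) ⊆ dyadicInterval j p := by
  obtain ⟨e, rfl⟩ := Int.le.dest hkj
  rw [show k + 1 + (e : ℤ) = k + ((e + 1 : ℕ) : ℤ) by push_cast; ring, dyadicInterval_subset_iff,
    pow_succ] at h
  rw [dyadicInterval_subset_iff]
  have h₁ : (2:ℤ)^e * 2 * p = 2 * (2^e * p) := by ring
  have h₂ : (2:ℤ)^e * 2 * (p + 1) = 2 * (2^e * (p + 1)) := by ring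
  omega

lemma eq_of_interior_dyadicInterval_inter_nonempty
    (h : (interior (dyadicInterval k m) ∩ dyadicInterval k p).Nonempty) : m = p := by
  rw [interior_dyadicInterval] at h
  obtain ⟨x, ⟨hm, hm'⟩, hp, hp'⟩ := h
  have h₁ : m < p + 1 := two_zpow_mul_lt_iff.1 (by push_cast; linarith)
  have h₂ : p < m + 1 := two_zpow_mul_lt_iff.1 (by push_cast; linarith)
  omega

lemma eventually_exists_dyadicInterval_mem (k : ℤ) (x : ℝ) :
    ∀ᶠ y in 𝓝 x, ∃ m, x ∈ dyadicInterval k m ∧ y ∈ dyadicInterval k m := by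
  have hs := zpow_pos (two_pos (α := ℝ)) k
  set s := (2:ℝ)^k with hs_def
  -- `x` lies in the intervals numbered `⌈x/s⌉ - 1` and `⌊x/s⌋`, which together cover a
  -- neighbourhood of `x`.
  have hlo : s * (⌈x / s⌉ - 1) < x := by
    nlinarith [Int.ceil_lt_add_one (x / s), mul_div_cancel₀ x hs.ne']
  have hhi : x < s * (⌊x / s⌋ + 1) := by
    nlinarith [Int.lt_floor_add_one (x / s), mul_div_cancel₀ x hs.ne']
  filter_upwards [Icc_mem_nhds hlo hhi] with y hy
  have hc : x ≤ s * ⌈x / s⌉ := by nlinarith [Int.le_ceil (x / s), mul_div_cancel₀ x hs.ne']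
  have hf : s * ⌊x / s⌋ ≤ x := by nlinarith [Int.floor_le (x / s), mul_div_cancel₀ x hs.ne']
  simp only [dyadicInterval, mem_Icc, ← hs_def]
  by_cases hy' : y ≤ s * ⌈x / s⌉
  · exact ⟨⌈x / s⌉ - 1, ⟨by push_cast; linarith, by push_cast; linarith⟩,
      ⟨by push_cast; linarith [hy.1], by push_cast; linarith⟩⟩
  · exact ⟨⌊x / s⌋, ⟨hf, by linarith⟩, ⟨by linarith, hy.2⟩⟩

end DyadicInterval

def latticeLine (k : ℤ) : Set ℝ := range fun m : ℤ => (2:ℝ)^k * m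

section LatticePoints

variable (k p : ℤ) (e : ℕ)

lemma latt_eq : latt k = latticeLine k ×ˢ latticeLine k := by
  ext z
  simp [latt, latticeLine, eq_comm]

lemma dyadicInterval_inter_latticeLine :
    dyadicInterval (k + e) p ∩ latticeLine k =
      (fun m : ℤ => (2:ℝ)^k * m) '' Icc (2^e * p) (2^e * (p + 1)) := by
  ext x
  constructor
  · rintro ⟨hx, m, rfl⟩
    exact ⟨m, (two_zpow_mul_mem_dyadicInterval_iff e).1 hx, rfl⟩
  · rintro ⟨m, hm, rfl⟩
    exact ⟨(two_zpow_mul_mem_dyadicInterval_iff e).2 hm, m, rfl⟩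

lemma finite_dyadicInterval_inter_latticeLine :
    (dyadicInterval (k + e) p ∩ latticeLine k).Finite := by
  rw [dyadicInterval_inter_latticeLine]
  exact (finite_Icc _ _).image _

lemma ncard_dyadicInterval_inter_latticeLine_le :
    (dyadicInterval (k + e) p ∩ latticeLine k).ncard ≤ 2^e + 1 := by
  rw [dyadicInterval_inter_latticeLine]
  refine (ncard_image_le (finite_Icc _ _)).trans_eq ?_
  rw [← Finset.coe_Icc, ncard_coe_finset, Int.card_Icc,
    show 2^e * (p + 1) + 1 - 2^e * p = ((2^e + 1 : ℕ) : ℤ) by push_cast; ring, Int.toNat_natCast]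

lemma ncard_frontier_dyadicInterval_inter_le (s : Set ℝ) :
    (frontier (dyadicInterval k p) ∩ s).ncard ≤ 2 := by
  rw [dyadicInterval, frontier_Icc (two_zpow_mul_lt_two_zpow_mul_add_one k p).le]
  exact (ncard_inter_le_ncard_left _ _ (toFinite _)).trans
    ((ncard_insert_le _ _).trans (by simp))

end LatticePoints

lemma sum_two_zpow_le {s : Finset ℤ} {K : ℤ} (h : ∀ k ∈ s, k ≤ K) :
    ∑ k ∈ s, (2:ℝ)^k ≤ 2^(K + 1) := by
  induction s using Finset.induction_on_max generalizing K with
  | empty => rw [Finset.sum_empty]; positivity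
  | insert a s hlt ih =>
    have hle : (2:ℝ)^a ≤ 2^K :=
      zpow_le_zpow_right₀ one_le_two (h a (Finset.mem_insert_self _ _))
    have hs := ih (K := a - 1) fun k hk => by linarith [hlt k hk]
    rw [sub_add_cancel] at hs
    rw [Finset.sum_insert fun ha => (hlt a ha).false, zpow_add_one₀ two_ne_zero]
    linarith

section DyadicSquare

lemma dSq_eq (a : ℤ × ℤ × ℤ) :
    dSq a = dyadicInterval a.1 a.2.1 ×ˢ dyadicInterval a.1 a.2.2 := rfl

lemma isClosed_dSq (a : ℤ × ℤ × ℤ) : IsClosed (dSq a) :=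
  (isClosed_dyadicInterval _ _).prod (isClosed_dyadicInterval _ _)

lemma interior_dSq (a : ℤ × ℤ × ℤ) : interior (dSq a) =
    interior (dyadicInterval a.1 a.2.1) ×ˢ interior (dyadicInterval a.1 a.2.2) :=
  interior_prod_eq _ _

lemma closure_interior_dSq (a : ℤ × ℤ × ℤ) : closure (interior (dSq a)) = dSq a := by
  rw [interior_dSq, closure_prod_eq, closure_interior_dyadicInterval,
    closure_interior_dyadicInterval]
  rfl

lemma eq_of_interior_dSq_inter_nonempty {a b : ℤ × ℤ × ℤ} (hl : a.1 = b.1)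
    (h : (interior (dSq a) ∩ dSq b).Nonempty) : a = b := by
  rw [interior_dSq] at h
  obtain ⟨z, ⟨hz₁, hz₂⟩, hz₁', hz₂'⟩ := h
  rw [← hl] at hz₁' hz₂'
  have h₁ := eq_of_interior_dyadicInterval_inter_nonempty ⟨z.1, hz₁, hz₁'⟩
  have h₂ := eq_of_interior_dyadicInterval_inter_nonempty ⟨z.2, hz₂, hz₂'⟩
  exact Prod.ext hl (Prod.ext h₁ h₂)

lemma eventually_exists_dSq_mem (j : ℤ) (z : ℝ × ℝ) :
    ∀ᶠ w in 𝓝 z, ∃ Q : ℤ × ℤ × ℤ, Q.1 = j ∧ z ∈ dSq Q ∧ w ∈ dSq Q := by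
  rw [← Prod.mk.eta (p := z), nhds_prod_eq]
  filter_upwards [(eventually_exists_dyadicInterval_mem j z.1).prod_mk
    (eventually_exists_dyadicInterval_mem j z.2)] with w ⟨⟨m, hzm, hwm⟩, ⟨n, hzn, hwn⟩⟩
  exact ⟨(j, m, n), rfl, ⟨hzm, hzn⟩, ⟨hwm, hwn⟩⟩

lemma dSq_subset_iff {a b : ℤ × ℤ × ℤ} : dSq a ⊆ dSq b ↔
    dyadicInterval a.1 a.2.1 ⊆ dyadicInterval b.1 b.2.1 ∧
      dyadicInterval a.1 a.2.2 ⊆ dyadicInterval b.1 b.2.2 := by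
  rw [dSq_eq, dSq_eq, prod_subset_prod_iff, or_iff_left]
  simp [(dyadicInterval_nonempty _ _).ne_empty]

lemma le_of_dSq_subset {a b : ℤ × ℤ × ℤ} (h : dSq a ⊆ dSq b) : a.1 ≤ b.1 :=
  le_of_dyadicInterval_subset (dSq_subset_iff.1 h).1

def parent (a : ℤ × ℤ × ℤ) : ℤ × ℤ × ℤ := (a.1 + 1, a.2.1 / 2, a.2.2 / 2)

lemma dSq_subset_dSq_parent (a : ℤ × ℤ × ℤ) : dSq a ⊆ dSq (parent a) :=
  prod_mono (dyadicInterval_subset_parent _ _) (dyadicInterval_subset_parent _ _)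

lemma dSq_parent_subset {a b : ℤ × ℤ × ℤ} (h : dSq a ⊆ dSq b) (hlt : a.1 < b.1) :
    dSq (parent a) ⊆ dSq b :=
  dSq_subset_iff.2 ⟨dyadicInterval_parent_subset (dSq_subset_iff.1 h).1 hlt,
    dyadicInterval_parent_subset (dSq_subset_iff.1 h).2 hlt⟩

def children (a : ℤ × ℤ × ℤ) : Finset (ℤ × ℤ × ℤ) :=
  (({0, 1} : Finset ℤ) ×ˢ ({0, 1} : Finset ℤ)).image
    fun d => (a.1 - 1, 2 * a.2.1 + d.1, 2 * a.2.2 + d.2)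

lemma mem_children_iff {a b : ℤ × ℤ × ℤ} : b ∈ children a ↔ parent b = a := by
  obtain ⟨k, m, n⟩ := a
  obtain ⟨k', m', n'⟩ := b
  simp only [children, parent, Finset.mem_image, Finset.mem_product, Finset.mem_insert,
    Finset.mem_singleton, Prod.mk.injEq, Prod.exists]
  constructor
  · rintro ⟨d, e, ⟨hd, he⟩, rfl, rfl, rfl⟩
    omega
  · rintro ⟨rfl, rfl, rfl⟩
    exact ⟨m' % 2, n' % 2, by omega, by omega, by omega, by omega⟩

lemma volume_dSq_toReal (a : ℤ × ℤ × ℤ) : (volume (dSq a)).toReal = 2^(2 * a.1) := by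
  rw [dSq_eq, Measure.volume_eq_prod, Measure.prod_prod, volume_dyadicInterval,
    volume_dyadicInterval, ENNReal.toReal_mul, ENNReal.toReal_ofReal (zpow_pos two_pos _).le,
    ← zpow_add₀ two_ne_zero, two_mul]

lemma volume_dSq_ne_top (a : ℤ × ℤ × ℤ) : volume (dSq a) ≠ ⊤ := by
  rw [dSq_eq, Measure.volume_eq_prod, Measure.prod_prod, volume_dyadicInterval,
    volume_dyadicInterval]
  exact ENNReal.mul_ne_top ENNReal.ofReal_ne_top ENNReal.ofReal_ne_top

lemma volume_interior_dSq (a : ℤ × ℤ × ℤ) : volume (interior (dSq a)) = volume (dSq a) := by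
  rw [interior_dSq, dSq_eq, Measure.volume_eq_prod, Measure.prod_prod, Measure.prod_prod,
    interior_dyadicInterval, interior_dyadicInterval, Real.volume_Ioo, Real.volume_Ioo]
  simp only [← Real.volume_Icc]
  rfl

lemma finite_frontier_dSq_inter_latt {k : ℤ} {a : ℤ × ℤ × ℤ} (h : k ≤ a.1) :
    (frontier (dSq a) ∩ latt k).Finite := by
  obtain ⟨j, p, q⟩ := a
  obtain ⟨e, rfl⟩ := Int.le.dest h
  refine ((finite_dyadicInterval_inter_latticeLine k p e).prod
    (finite_dyadicInterval_inter_latticeLine k q e)).subset ?_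
  rw [← prod_inter_prod, ← latt_eq]
  exact inter_subset_inter_left _ (isClosed_dSq _).frontier_subset

lemma ncard_frontier_dSq_inter_latt_le (k p q : ℤ) (e : ℕ) :
    (frontier (dSq (k + e, p, q)) ∩ latt k).ncard ≤ 8 * 2^e := by
  rw [dSq_eq, frontier_prod_eq, (isClosed_dyadicInterval _ _).closure_eq,
    (isClosed_dyadicInterval _ _).closure_eq, latt_eq,
    union_inter_distrib_right, prod_inter_prod, prod_inter_prod]
  refine (ncard_union_le _ _).trans ?_
  rw [ncard_prod, ncard_prod]
  have hp := ncard_dyadicInterval_inter_latticeLine_le k p e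
  have hq := ncard_dyadicInterval_inter_latticeLine_le k q e
  have hp' := ncard_frontier_dyadicInterval_inter_le (k + e) p (latticeLine k)
  have hq' := ncard_frontier_dyadicInterval_inter_le (k + e) q (latticeLine k)
  calc _ ≤ (2^e + 1) * 2 + 2 * (2^e + 1) :=
        add_le_add (Nat.mul_le_mul hp hq') (Nat.mul_le_mul hp' hq)
    _ ≤ 8 * 2^e := by linarith [Nat.one_le_two_pow (n := e)]

lemma two_zpow_mul_ncard_frontier_dSq_inter_latt_le {k : ℤ} {a : ℤ × ℤ × ℤ} (h : k ≤ a.1) :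
    (2:ℝ)^k * (frontier (dSq a) ∩ latt k).ncard ≤ 8 * 2^a.1 := by
  obtain ⟨j, p, q⟩ := a
  obtain ⟨e, rfl⟩ := Int.le.dest h
  calc (2:ℝ)^k * (frontier (dSq (k + e, p, q)) ∩ latt k).ncard ≤ 2^k * (8 * 2^e : ℕ) := by
        gcongr; exact ncard_frontier_dSq_inter_latt_le k p q e
    _ = 8 * 2^(k + e) := by push_cast; rw [zpow_add₀ two_ne_zero, zpow_natCast]; ring

end DyadicSquare

namespace ConvexTree

variable (T : ConvexTree)

lemma level_le_root {a : ℤ × ℤ × ℤ} (ha : a ∈ T.squares) : a.1 ≤ T.root.1 :=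
  le_of_dSq_subset (T.subset_root a ha)

lemma parent_mem {a : ℤ × ℤ × ℤ} (ha : a ∈ T.squares) (hlt : a.1 < T.root.1) :
    parent a ∈ T.squares :=
  T.convex a (parent a) T.root ha T.root_mem (dSq_subset_dSq_parent a)
    (dSq_parent_subset (T.subset_root a ha) hlt)

lemma mem_Tk_iff {k : ℤ} {z : ℝ × ℝ} :
    z ∈ Tk T k ↔ ∃ a ∈ T.squares, a.1 = k ∧ z ∈ dSq a := by
  simp [Tk, treeLevel, and_assoc]

lemma dSq_subset_Tk {a : ℤ × ℤ × ℤ} (ha : a ∈ T.squares) : dSq a ⊆ Tk T a.1 :=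
  fun _ hz => T.mem_Tk_iff.2 ⟨a, ha, rfl, hz⟩

lemma isClosed_Tk (k : ℤ) : IsClosed (Tk T k) :=
  (T.squares.finite_toSet.subset fun _ ha => ha.1).isClosed_biUnion fun a _ => isClosed_dSq a

lemma Tk_subset_Tk_add_one {k : ℤ} (hk : k < T.root.1) : Tk T k ⊆ Tk T (k + 1) := by
  intro z hz
  obtain ⟨a, ha, rfl, hza⟩ := T.mem_Tk_iff.1 hz
  exact T.dSq_subset_Tk (T.parent_mem ha hk) (dSq_subset_dSq_parent a hza)

lemma Tk_mono {i j : ℤ} (hij : i ≤ j) (hj : j ≤ T.root.1) : Tk T i ⊆ Tk T j := by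
  induction j, hij using Int.leInduction with
  | base => exact subset_rfl
  | succ j _ ih => exact (ih (by omega)).trans (T.Tk_subset_Tk_add_one (by omega))

lemma Tk_root : Tk T T.root.1 = dSq T.root := by
  refine Subset.antisymm (fun z hz => ?_) (T.dSq_subset_Tk T.root_mem)
  obtain ⟨a, ha, -, hza⟩ := T.mem_Tk_iff.1 hz
  exact T.subset_root a ha hza

lemma mem_squares_of_interior_inter_nonempty {b : ℤ × ℤ × ℤ}
    (h : (interior (dSq b) ∩ Tk T b.1).Nonempty) : b ∈ T.squares := by
  obtain ⟨z, hzb, hz⟩ := h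
  obtain ⟨a, ha, hab, hza⟩ := T.mem_Tk_iff.1 hz
  rwa [eq_of_interior_dSq_inter_nonempty hab.symm ⟨z, hzb, hza⟩]

lemma mem_interior_Tk {j : ℤ} {z : ℝ × ℝ}
    (h : ∀ Q : ℤ × ℤ × ℤ, Q.1 = j → z ∈ dSq Q → Q ∈ T.squares) :
    z ∈ interior (Tk T j) := by
  rw [mem_interior_iff_mem_nhds]
  filter_upwards [eventually_exists_dSq_mem j z] with w ⟨Q, hQ, hzQ, hwQ⟩
  exact T.mem_Tk_iff.2 ⟨Q, h Q hQ hzQ, hQ, hwQ⟩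

lemma parent_mem_of_mem_interior {Q : ℤ × ℤ × ℤ} {z : ℝ × ℝ} (hzQ : z ∈ dSq Q)
    (hz : z ∈ interior (Tk T (Q.1 + 1))) : parent Q ∈ T.squares := by
  have hcl : z ∈ closure (interior (dSq (parent Q))) := by
    rw [closure_interior_dSq]; exact dSq_subset_dSq_parent Q hzQ
  obtain ⟨w, hw, hwQ⟩ := mem_closure_iff.1 hcl _ isOpen_interior hz
  exact T.mem_squares_of_interior_inter_nonempty ⟨w, hwQ, interior_subset hw⟩

def outerChildren : Finset (ℤ × ℤ × ℤ) :=
  (T.squares.biUnion children).filter (· ∉ T.squares)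

def boundarySquares : Finset (ℤ × ℤ × ℤ) := insert T.root T.outerChildren

variable {T}

lemma mem_outerChildren {b : ℤ × ℤ × ℤ} :
    b ∈ T.outerChildren ↔ b ∉ T.squares ∧ parent b ∈ T.squares := by
  simp [outerChildren, mem_children_iff, and_comm]

lemma level_add_one_le_of_mem_outerChildren {b : ℤ × ℤ × ℤ} (hb : b ∈ T.outerChildren) :
    b.1 + 1 ≤ T.root.1 :=
  T.level_le_root (mem_outerChildren.1 hb).2

lemma interior_dSq_inter_Tk_eq_empty {b : ℤ × ℤ × ℤ} (hb : b ∉ T.squares) :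
    interior (dSq b) ∩ Tk T b.1 = ∅ :=
  not_nonempty_iff_eq_empty.1 fun h => hb (T.mem_squares_of_interior_inter_nonempty h)

lemma dSq_subset_Tk_of_mem_outerChildren {b : ℤ × ℤ × ℤ} (hb : b ∈ T.outerChildren) :
    dSq b ⊆ Tk T (b.1 + 1) :=
  (dSq_subset_dSq_parent b).trans (T.dSq_subset_Tk (mem_outerChildren.1 hb).2)

lemma pairwiseDisjoint_interior_outerChildren :
    (T.outerChildren : Set (ℤ × ℤ × ℤ)).PairwiseDisjoint fun b => interior (dSq b) := by
  suffices key : ∀ b ∈ T.outerChildren, ∀ c ∈ T.outerChildren, b ≠ c → b.1 ≤ c.1 →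
      Disjoint (interior (dSq b)) (interior (dSq c)) by
    intro b hb c hc hne
    rcases le_total b.1 c.1 with h | h
    · exact key b hb c hc hne h
    · exact (key c hc b hb hne.symm h).symm
  intro b hb c hc hne hle
  rw [Set.disjoint_iff_inter_eq_empty, ← Set.not_nonempty_iff_eq_empty]
  rintro ⟨z, hzb, hzc⟩
  rcases hle.eq_or_lt with heq | hlt
  · exact hne (eq_of_interior_dSq_inter_nonempty heq ⟨z, hzb, interior_subset hzc⟩)
  · have hzT : z ∈ Tk T c.1 :=
      T.Tk_mono hlt (by linarith [level_add_one_le_of_mem_outerChildren hc])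
        (dSq_subset_Tk_of_mem_outerChildren hb (interior_subset hzb))
    exact (interior_dSq_inter_Tk_eq_empty (mem_outerChildren.1 hc).1).subset ⟨hzc, hzT⟩

lemma sum_volume_outerChildren_le :
    ∑ b ∈ T.outerChildren, volume (dSq b) ≤ volume (dSq T.root) := by
  calc ∑ b ∈ T.outerChildren, volume (dSq b)
      = ∑ b ∈ T.outerChildren, volume (interior (dSq b)) := by simp_rw [volume_interior_dSq]
    _ = volume (⋃ b ∈ T.outerChildren, interior (dSq b)) :=
      (measure_biUnion_finset pairwiseDisjoint_interior_outerChildren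
        fun _ _ => isOpen_interior.measurableSet).symm
    _ ≤ volume (dSq T.root) := by
      refine measure_mono (iUnion₂_subset fun b hb => interior_subset.trans ?_)
      rw [← T.Tk_root]
      exact (dSq_subset_Tk_of_mem_outerChildren hb).trans
        (T.Tk_mono (level_add_one_le_of_mem_outerChildren hb) le_rfl)

lemma sum_volume_boundarySquares_le :
    ∑ b ∈ T.boundarySquares, (volume (dSq b)).toReal ≤ 2 * (volume (dSq T.root)).toReal := by
  have hroot : T.root ∉ T.outerChildren := fun h => (mem_outerChildren.1 h).1 T.root_mem
  rw [boundarySquares, Finset.sum_insert hroot, two_mul,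
    ← ENNReal.toReal_sum fun b _ => volume_dSq_ne_top b]
  gcongr
  · exact volume_dSq_ne_top _
  · exact sum_volume_outerChildren_le

lemma mem_frontier_dSq_of_mem_Tk {b : ℤ × ℤ × ℤ} {z : ℝ × ℝ} (hb : b ∉ T.squares)
    (hzb : z ∈ dSq b) (hz : z ∈ Tk T b.1) : z ∈ frontier (dSq b) := by
  rw [(isClosed_dSq b).frontier_eq]
  exact ⟨hzb, fun hzi => (interior_dSq_inter_Tk_eq_empty hb).subset ⟨hzi, hz⟩⟩

lemma exists_boundarySquare_of_mem_frontier {z : ℝ × ℝ} :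
    ∀ j ≤ T.root.1, z ∈ frontier (Tk T j) →
      ∃ b ∈ T.boundarySquares, j ≤ b.1 ∧ z ∈ frontier (dSq b) := by
  refine Int.leInductionDown ?_ fun j hj ih hz => ?_
  · intro hz
    rw [T.Tk_root] at hz
    exact ⟨T.root, Finset.mem_insert_self _ _, le_rfl, hz⟩
  rw [(T.isClosed_Tk _).frontier_eq] at hz
  by_cases hzj : z ∈ interior (Tk T j)
  · obtain ⟨Q, hQ, hzQ, hQT⟩ :
        ∃ Q : ℤ × ℤ × ℤ, Q.1 = j - 1 ∧ z ∈ dSq Q ∧ Q ∉ T.squares := by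
      by_contra! h
      exact hz.2 (T.mem_interior_Tk h)
    have hpar : parent Q ∈ T.squares :=
      T.parent_mem_of_mem_interior hzQ (by rwa [hQ, sub_add_cancel])
    refine ⟨Q, Finset.mem_insert_of_mem (mem_outerChildren.2 ⟨hQT, hpar⟩), hQ.ge, ?_⟩
    exact mem_frontier_dSq_of_mem_Tk hQT hzQ (hQ ▸ hz.1)
  · have hzT : z ∈ Tk T j := by
      simpa using T.Tk_subset_Tk_add_one (k := j - 1) (by omega) hz.1
    obtain ⟨b, hb, hjb, hzb⟩ := ih (by rw [(T.isClosed_Tk _).frontier_eq]; exact ⟨hzT, hzj⟩)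
    exact ⟨b, hb, by omega, hzb⟩

lemma frontier_Tk_subset (k : ℤ) :
    frontier (Tk T k) ⊆ ⋃ b ∈ T.boundarySquares.filter (k ≤ ·.1), frontier (dSq b) := by
  intro z hz
  have hk : k ≤ T.root.1 := by
    obtain ⟨a, ha, rfl, -⟩ := T.mem_Tk_iff.1 ((T.isClosed_Tk k).frontier_subset hz)
    exact T.level_le_root ha
  obtain ⟨b, hb, hkb, hzb⟩ := exists_boundarySquare_of_mem_frontier k hk hz
  exact mem_biUnion (Finset.mem_filter.2 ⟨hb, hkb⟩) hzb

variable (T)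

lemma two_zpow_mul_ncard_Delta_le (k : ℤ) :
    (2:ℝ)^(2 * k) * (Delta T k).ncard ≤
      ∑ b ∈ T.boundarySquares.filter (k ≤ ·.1), 2^k * (8 * 2^b.1) := by
  set F := T.boundarySquares.filter (k ≤ ·.1)
  have hsub : Delta T k ⊆ ⋃ b ∈ F, frontier (dSq b) ∩ latt k := by
    rintro z ⟨hz, hzl⟩
    obtain ⟨b, hb, hzb⟩ := mem_iUnion₂.1 (frontier_Tk_subset k hz)
    exact mem_iUnion₂.2 ⟨b, hb, hzb, hzl⟩
  have hfin : (⋃ b ∈ F, frontier (dSq b) ∩ latt k).Finite :=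
    F.finite_toSet.biUnion fun b hb => finite_frontier_dSq_inter_latt (Finset.mem_filter.1 hb).2
  have hcard : ((Delta T k).ncard : ℝ) ≤ ∑ b ∈ F, ((frontier (dSq b) ∩ latt k).ncard : ℝ) := by
    exact_mod_cast (ncard_le_ncard hsub hfin).trans (F.set_ncard_biUnion_le _)
  calc (2:ℝ)^(2 * k) * (Delta T k).ncard = 2^k * (2^k * (Delta T k).ncard) := by
        rw [two_mul, zpow_add₀ two_ne_zero, mul_assoc]
    _ ≤ 2^k * ∑ b ∈ F, 2^k * ((frontier (dSq b) ∩ latt k).ncard : ℝ) := by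
        rw [← Finset.mul_sum]; gcongr
    _ ≤ ∑ b ∈ F, 2^k * (8 * 2^b.1) := by
        rw [Finset.mul_sum]
        exact Finset.sum_le_sum fun b hb => mul_le_mul_of_nonneg_left
          (two_zpow_mul_ncard_frontier_dSq_inter_latt_le (Finset.mem_filter.1 hb).2)
          (by positivity)

lemma sum_two_zpow_mul_ncard_Delta_le (s : Finset ℤ) :
    ∑ k ∈ s, (2:ℝ)^(2 * k) * (Delta T k).ncard ≤
      16 * ∑ b ∈ T.boundarySquares, (volume (dSq b)).toReal := by
  calc ∑ k ∈ s, (2:ℝ)^(2 * k) * (Delta T k).ncard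
      ≤ ∑ k ∈ s, ∑ b ∈ T.boundarySquares.filter (k ≤ ·.1), 2^k * (8 * 2^b.1) :=
        Finset.sum_le_sum fun k _ => T.two_zpow_mul_ncard_Delta_le k
    _ = ∑ b ∈ T.boundarySquares, (∑ k ∈ s.filter (· ≤ b.1), 2^k) * (8 * 2^b.1) := by
        simp_rw [Finset.sum_mul]
        exact Finset.sum_comm' fun k b => by simp only [Finset.mem_filter]; tauto
    _ ≤ ∑ b ∈ T.boundarySquares, 2^(b.1 + 1) * (8 * 2^b.1) := by
        gcongr with b
        exact sum_two_zpow_le fun k hk => (Finset.mem_filter.1 hk).2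
    _ = 16 * ∑ b ∈ T.boundarySquares, (volume (dSq b)).toReal := by
        rw [Finset.mul_sum]
        refine Finset.sum_congr rfl fun b _ => ?_
        rw [volume_dSq_toReal, zpow_add_one₀ two_ne_zero, two_mul, zpow_add₀ two_ne_zero]
        ring

end ConvexTree

/-- Lemma 2.1: `∑_k 2^{2k} #Δ(𝒯_k) ≲ |R_𝒯|` for every convex tree `𝒯`. -/
theorem boundary_count : ∃ C : ℝ, 0 < C ∧ ∀ T : ConvexTree,
    ∑' k : ℤ, (2:ℝ)^(2*k) * ((Delta T k).ncard : ℝ) ≤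
      C * (volume (dSq T.root)).toReal := by
  refine ⟨32, by norm_num, fun T => tsum_le_of_sum_le' (by positivity) fun s => ?_⟩
  calc ∑ k ∈ s, (2:ℝ)^(2 * k) * (Delta T k).ncard
      ≤ 16 * ∑ b ∈ T.boundarySquares, (volume (dSq b)).toReal :=
        T.sum_two_zpow_mul_ncard_Delta_le s
    _ ≤ 16 * (2 * (volume (dSq T.root)).toReal) := by
        gcongr; exact ConvexTree.sum_volume_boundarySquares_le
    _ = 32 * (volume (dSq T.root)).toReal := by ring

end
end

section
/- Let F₁,F₂,F₃,F₄ be bounded, positive, measurable functions on ℝ² with finite measure support and let 𝒞 be a collection of dyadic squares. Then for every (p,q,t) ∈ Ω_𝒞 one has F * [ϑ⊗ϑ⊗ϑ⊗ϑ]_t(p,q,p,q) ≤ ∏_{j=1}^4 M(F_j,𝒞), where F is the entangled product of F₁,F₂,F₃,F₄. -/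
open MeasureTheory Set

noncomputable section

/-!
Put the square root of the tensor weight `[ϑ]_t(p - x) [ϑ]_t(q - y)` into each `Fⱼ`, obtaining
`Gⱼ`; the entangled convolution becomes the box form
`∫ G₁(x,y) G₂(x',y) G₃(x',y') G₄(x,y')`. On `(ℝ²)²` this is the pairing of `G₁ ⊗ G₃` with
`(G₂ ⊗ G₄) ∘ σ`, where `σ((x,y),(x',y')) = ((x',y),(x,y'))` preserves measure, so Cauchy–Schwarz
bounds it by `∏ ‖Gⱼ‖₂`. Finally `ϑ ⊗ ϑ ≤ θ` gives `‖Gⱼ‖₂² ≤ Fⱼ² * [θ]_t(p,q) ≤ M(Fⱼ,𝒞)²`; the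
supremum defining `M` is finite because `Fⱼ` is bounded and `θ` is integrable.
-/

section BoxCauchySchwarz

variable {α β γ δ : Type*} [MeasurableSpace α] [MeasurableSpace β] [MeasurableSpace γ]
  [MeasurableSpace δ]

def MeasurableEquiv.prodProdProdComm (α β γ δ : Type*) [MeasurableSpace α] [MeasurableSpace β]
    [MeasurableSpace γ] [MeasurableSpace δ] : (α × β) × γ × δ ≃ᵐ (α × γ) × β × δ where
  toEquiv := Equiv.prodProdProdComm α β γ δ
  measurable_toFun := (measurable_fst.fst.prodMk measurable_snd.fst).prodMk
    (measurable_fst.snd.prodMk measurable_snd.snd)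
  measurable_invFun := (measurable_fst.fst.prodMk measurable_snd.fst).prodMk
    (measurable_fst.snd.prodMk measurable_snd.snd)

theorem measurePreserving_prodProdProdComm (μa : Measure α) (μb : Measure β) (μc : Measure γ)
    (μd : Measure δ) [SFinite μa] [SFinite μb] [SFinite μc] [SFinite μd] :
    MeasurePreserving (MeasurableEquiv.prodProdProdComm α β γ δ)
      ((μa.prod μb).prod (μc.prod μd)) ((μa.prod μc).prod (μb.prod μd)) := by
  have e₁ := measurePreserving_prodAssoc μa μb (μc.prod μd)
  have e₂ := (measurePreserving_prodAssoc μb μc μd).symm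
  have e₃ := (Measure.measurePreserving_swap (μ := μb) (ν := μc)).prod (MeasurePreserving.id μd)
  have e₄ := measurePreserving_prodAssoc μc μb μd
  have e₅ := (measurePreserving_prodAssoc μa μc (μb.prod μd)).symm
  exact (e₅.comp ((MeasurePreserving.id μa).prod (e₄.comp (e₃.comp e₂)))).comp e₁

variable {μ : Measure α} {ν : Measure β}

theorem integral_prod_prod_eq_integral_iterate [SigmaFinite μ] [SigmaFinite ν] {E : Type*}
    [NormedAddCommGroup E] [NormedSpace ℝ E] {f : (α × β) × α × β → E}
    (hf : Integrable f ((μ.prod ν).prod (μ.prod ν))) :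
    ∫ ω, f ω ∂(μ.prod ν).prod (μ.prod ν) =
      ∫ x, ∫ y, ∫ x', ∫ y', f ((x, y), (x', y')) ∂ν ∂μ ∂ν ∂μ := by
  have inner : ∀ᵐ z ∂μ.prod ν,
      ∫ z', f (z, z') ∂μ.prod ν = ∫ x', ∫ y', f (z, (x', y')) ∂ν ∂μ :=
    hf.prod_right_ae.mono fun z hz => integral_prod _ hz
  rw [integral_prod _ hf, integral_congr_ae inner, integral_prod]
  exact hf.integral_prod_left.congr inner

theorem integral_mul_le_sqrt_mul_sqrt {f g : α → ℝ} (hf : MemLp f 2 μ) (hg : MemLp g 2 μ) :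
    ∫ a, f a * g a ∂μ ≤ √(∫ a, f a ^ 2 ∂μ) * √(∫ a, g a ^ 2 ∂μ) := by
  have holder := integral_mul_norm_le_Lp_mul_Lq (μ := μ) Real.HolderConjugate.two_two
    (by simpa using hf) (by simpa using hg)
  simp only [Real.norm_eq_abs, Real.rpow_two, sq_abs, ← Real.sqrt_eq_rpow] at holder
  refine le_trans (integral_mono (hf.integrable_mul hg) ?_ fun a => ?_) holder
  · simpa only [Pi.mul_apply, ← abs_mul] using (hf.integrable_mul hg).abs
  · exact (le_abs_self _).trans_eq (abs_mul _ _)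

theorem MeasureTheory.MemLp.mul_prod_two [SFinite ν] {f : α → ℝ} {g : β → ℝ} (hf : MemLp f 2 μ)
    (hg : MemLp g 2 ν) : MemLp (fun z => f z.1 * g z.2) 2 (μ.prod ν) := by
  refine (memLp_two_iff_integrable_sq (hf.1.comp_fst.mul hg.1.comp_snd)).2 ?_
  simpa only [Pi.mul_apply, mul_pow] using
    ((memLp_two_iff_integrable_sq hf.1).1 hf).mul_prod ((memLp_two_iff_integrable_sq hg.1).1 hg)

theorem integral_sq_mul_prod [SFinite μ] [SFinite ν] (f : α → ℝ) (g : β → ℝ) :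
    ∫ z, (f z.1 * g z.2) ^ 2 ∂μ.prod ν = (∫ x, f x ^ 2 ∂μ) * ∫ y, g y ^ 2 ∂ν := by
  simp_rw [mul_pow]
  exact integral_prod_mul (fun x => f x ^ 2) (fun y => g y ^ 2)

def MeasurableEquiv.boxSwap (α β : Type*) [MeasurableSpace α] [MeasurableSpace β] :
    (α × β) × α × β ≃ᵐ (α × β) × α × β :=
  (prodProdProdComm α β α β).trans
    ((prodComm.prodCongr (refl _)).trans (prodProdProdComm α α β β))

@[simp]
theorem MeasurableEquiv.boxSwap_apply (x x' : α) (y y' : β) :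
    boxSwap α β ((x, y), (x', y')) = ((x', y), (x, y')) :=
  rfl

theorem measurePreserving_boxSwap [SigmaFinite μ] [SigmaFinite ν] :
    MeasurePreserving (MeasurableEquiv.boxSwap α β) ((μ.prod ν).prod (μ.prod ν))
      ((μ.prod ν).prod (μ.prod ν)) :=
  (measurePreserving_prodProdProdComm μ μ ν ν).comp <|
    (Measure.measurePreserving_swap.prod (MeasurePreserving.id _)).comp
      (measurePreserving_prodProdProdComm μ ν μ ν)

theorem integral_box_le [SigmaFinite μ] [SigmaFinite ν] {G₁ G₂ G₃ G₄ : α × β → ℝ}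
    (h₁ : MemLp G₁ 2 (μ.prod ν)) (h₂ : MemLp G₂ 2 (μ.prod ν)) (h₃ : MemLp G₃ 2 (μ.prod ν))
    (h₄ : MemLp G₄ 2 (μ.prod ν)) :
    ∫ x, ∫ y, ∫ x', ∫ y', G₁ (x, y) * G₂ (x', y) * G₃ (x', y') * G₄ (x, y') ∂ν ∂μ ∂ν ∂μ ≤
      √(∫ z, G₁ z ^ 2 ∂μ.prod ν) * √(∫ z, G₂ z ^ 2 ∂μ.prod ν) * √(∫ z, G₃ z ^ 2 ∂μ.prod ν) *
        √(∫ z, G₄ z ^ 2 ∂μ.prod ν) := by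
  let A : (α × β) × α × β → ℝ := fun ω => G₁ ω.1 * G₃ ω.2
  let B : (α × β) × α × β → ℝ := fun ω => G₂ ω.1 * G₄ ω.2
  have hσ := measurePreserving_boxSwap (μ := μ) (ν := ν)
  have hA : MemLp A 2 _ := h₁.mul_prod_two h₃
  have hB : MemLp (B ∘ MeasurableEquiv.boxSwap α β) 2 _ :=
    (h₂.mul_prod_two h₄).comp_measurePreserving hσ
  calc _ = ∫ ω, (A * (B ∘ MeasurableEquiv.boxSwap α β)) ω ∂(μ.prod ν).prod (μ.prod ν) := by
        rw [integral_prod_prod_eq_integral_iterate (hA.integrable_mul hB)]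
        simp only [Pi.mul_apply, Function.comp_apply, MeasurableEquiv.boxSwap_apply]
        congr! 8 with x y x' y'
        ring
    _ ≤ _ := integral_mul_le_sqrt_mul_sqrt hA hB
    _ = _ := by
      simp only [A, B, Function.comp_apply]
      rw [hσ.integral_comp' (fun ω => (G₂ ω.1 * G₄ ω.2) ^ 2), integral_sq_mul_prod,
        integral_sq_mul_prod, Real.sqrt_mul (integral_nonneg fun _ => sq_nonneg _),
        Real.sqrt_mul (integral_nonneg fun _ => sq_nonneg _)]
      ring

end BoxCauchySchwarz

theorem vth_nonneg (x : ℝ) : 0 ≤ vth x := by unfold vth; positivity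

@[fun_prop]
theorem measurable_vth : Measurable vth := by unfold vth; fun_prop

theorem theta_nonneg (z : ℝ × ℝ) : 0 ≤ theta z := by unfold theta en; positivity

theorem measurable_theta : Measurable theta := by unfold theta en; fun_prop

theorem theta_mk (a b : ℝ) : theta (a, b) = (1 + (a ^ 2 + b ^ 2) ^ 2)⁻¹ := by
  rw [theta, en, show (4 : ℕ) = 2 * 2 from rfl, pow_mul, Real.sq_sqrt (by positivity)]

theorem vth_mul_vth_le_theta (a b : ℝ) : vth a * vth b ≤ theta (a, b) := by
  rw [theta_mk, vth, vth, ← mul_inv, ← mul_pow]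
  refine inv_anti₀ (by positivity) ?_
  have ha : 1 + a ^ 2 ≤ (1 + |a|) ^ 2 := by nlinarith [sq_abs a, abs_nonneg a]
  have hb : 1 + b ^ 2 ≤ (1 + |b|) ^ 2 := by nlinarith [sq_abs b, abs_nonneg b]
  calc 1 + (a ^ 2 + b ^ 2) ^ 2 ≤ ((1 + a ^ 2) * (1 + b ^ 2)) ^ 2 := by
        nlinarith [sq_nonneg a, sq_nonneg b, mul_nonneg (sq_nonneg a) (sq_nonneg b)]
    _ ≤ ((1 + |a|) ^ 2 * (1 + |b|) ^ 2) ^ 2 := by gcongr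
    _ = ((1 + |a|) * (1 + |b|)) ^ 4 := by ring

theorem theta_le_two_mul (a b : ℝ) : theta (a, b) ≤ 2 * ((1 + a ^ 2)⁻¹ * (1 + b ^ 2)⁻¹) := by
  rw [theta_mk, ← mul_inv, ← div_eq_mul_inv, ← inv_div]
  refine inv_anti₀ (by positivity) ?_
  nlinarith [sq_nonneg a, sq_nonneg b, sq_nonneg (a * b), sq_nonneg (a ^ 2 + b ^ 2 - 1)]

theorem integrable_theta : Integrable theta := by
  have hmaj : Integrable (fun z : ℝ × ℝ => 2 * ((1 + z.1 ^ 2)⁻¹ * (1 + z.2 ^ 2)⁻¹)) := by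
    rw [Measure.volume_eq_prod]
    exact (integrable_inv_one_add_sq.mul_prod integrable_inv_one_add_sq).const_mul 2
  refine hmaj.mono' measurable_theta.aestronglyMeasurable (ae_of_all _ fun z => ?_)
  rw [Real.norm_of_nonneg (theta_nonneg z)]
  exact theta_le_two_mul z.1 z.2

/-- `[θ]_t((p, q) - z)`. -/
def thetaKernel (p q t : ℝ) (z : ℝ × ℝ) : ℝ := (t ^ 2)⁻¹ * theta ((p - z.1) / t, (q - z.2) / t)

theorem thetaKernel_nonneg (p q t : ℝ) (z : ℝ × ℝ) : 0 ≤ thetaKernel p q t z :=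
  mul_nonneg (by positivity) (theta_nonneg _)

theorem thetaKernel_eq (p q t : ℝ) :
    thetaKernel p q t = fun z => (t ^ 2)⁻¹ * theta (t⁻¹ • ((p, q) - z)) := by
  ext z
  simp only [thetaKernel, div_eq_inv_mul]
  rfl

theorem integrable_thetaKernel (p q : ℝ) {t : ℝ} (ht : t ≠ 0) : Integrable (thetaKernel p q t) := by
  rw [thetaKernel_eq]
  exact ((integrable_theta.comp_smul (inv_ne_zero ht)).comp_sub_left (p, q)).const_mul _

theorem integral_thetaKernel (p q : ℝ) {t : ℝ} (ht : t ≠ 0) :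
    ∫ z, thetaKernel p q t z = ∫ z, theta z := by
  rw [thetaKernel_eq, integral_const_mul, integral_sub_left_eq_self (fun z => theta (t⁻¹ • z)),
    Measure.integral_comp_inv_smul]
  simp [ht]

theorem integrable_sq_mul_thetaKernel {F : ℝ × ℝ → ℝ} (hF : AEStronglyMeasurable F) {B : ℝ}
    (hB : ∀ z, |F z| ≤ B) (p q : ℝ) {t : ℝ} (ht : t ≠ 0) :
    Integrable fun z => F z ^ 2 * thetaKernel p q t z :=
  (integrable_thetaKernel p q ht).bdd_mul (hF.pow 2) (ae_of_all _ fun z => by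
    simpa [sq_abs] using pow_le_pow_left₀ (abs_nonneg _) (hB z) 2)

theorem convTheta_le {F : ℝ × ℝ → ℝ} {B : ℝ} (hB : ∀ z, |F z| ≤ B) (p q : ℝ) {t : ℝ}
    (ht : t ≠ 0) : convTheta F p q t ≤ B ^ 2 * ∫ z, theta z := by
  rw [← integral_thetaKernel p q ht, ← integral_const_mul]
  refine integral_mono_of_nonneg (ae_of_all _ fun z => ?_)
    ((integrable_thetaKernel p q ht).const_mul _) (ae_of_all _ fun z => ?_)
  · exact mul_nonneg (sq_nonneg _) (thetaKernel_nonneg p q t z)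
  · exact mul_le_mul_of_nonneg_right (sq_le_sq' (abs_le.1 (hB z)).1 (abs_le.1 (hB z)).2)
      (thetaKernel_nonneg p q t z)

theorem pos_of_mem_Omega {C : Set (ℤ × ℤ × ℤ)} {p q t : ℝ} (hw : ((p, q), t) ∈ Omega C) :
    0 < t := by
  simp only [Omega, mem_iUnion, mem_prod, mem_Icc] at hw
  obtain ⟨a, -, -, ht, -⟩ := hw
  exact lt_of_lt_of_le (by positivity) ht

theorem Msize_nonneg (F : ℝ × ℝ → ℝ) (C : Set (ℤ × ℤ × ℤ)) : 0 ≤ Msize F C :=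
  Real.iSup_nonneg fun _ => Real.sqrt_nonneg _

theorem sqrt_convTheta_le_Msize {F : ℝ × ℝ → ℝ} {B : ℝ} (hB : ∀ z, |F z| ≤ B)
    {C : Set (ℤ × ℤ × ℤ)} {p q t : ℝ} (hw : ((p, q), t) ∈ Omega C) :
    √(convTheta F p q t) ≤ Msize F C := by
  refine le_ciSup (f := fun w : Omega C => √(convTheta F w.1.1.1 w.1.1.2 w.1.2))
    ⟨√(B ^ 2 * ∫ z, theta z), ?_⟩ ⟨_, hw⟩
  rintro _ ⟨w, rfl⟩
  exact Real.sqrt_le_sqrt (convTheta_le hB _ _ (pos_of_mem_Omega w.2).ne')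

/-- `[ϑ]_t(p - x)`. -/
def vthKernel (t p x : ℝ) : ℝ := t⁻¹ * vth ((p - x) / t)

theorem vthKernel_nonneg {t : ℝ} (ht : 0 ≤ t) (p x : ℝ) : 0 ≤ vthKernel t p x :=
  mul_nonneg (inv_nonneg.2 ht) (vth_nonneg _)

theorem vthKernel_mul_vthKernel_le_thetaKernel (t p q : ℝ) (z : ℝ × ℝ) :
    vthKernel t p z.1 * vthKernel t q z.2 ≤ thetaKernel p q t z := by
  calc vthKernel t p z.1 * vthKernel t q z.2
      = (t ^ 2)⁻¹ * (vth ((p - z.1) / t) * vth ((q - z.2) / t)) := by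
        rw [vthKernel, vthKernel, sq, mul_inv]; ring
    _ ≤ thetaKernel p q t z :=
        mul_le_mul_of_nonneg_left (vth_mul_vth_le_theta _ _) (by positivity)

/-- Each of the weights `[ϑ]_t(p - x)`, `[ϑ]_t(q - y)`, `[ϑ]_t(p - x')`, `[ϑ]_t(q - y')` occurs in
exactly two of the four factors of the entangled product, so these square roots multiply back to
the full weight. -/
def vthWeighted (F : ℝ × ℝ → ℝ) (t p q : ℝ) (z : ℝ × ℝ) : ℝ :=
  F z * √(vthKernel t p z.1 * vthKernel t q z.2)

theorem vthWeighted_sq_le (F : ℝ × ℝ → ℝ) {t : ℝ} (ht : 0 ≤ t) (p q : ℝ) (z : ℝ × ℝ) :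
    vthWeighted F t p q z ^ 2 ≤ F z ^ 2 * thetaKernel p q t z := by
  rw [vthWeighted, mul_pow,
    Real.sq_sqrt (mul_nonneg (vthKernel_nonneg ht _ _) (vthKernel_nonneg ht _ _))]
  exact mul_le_mul_of_nonneg_left (vthKernel_mul_vthKernel_le_thetaKernel t p q z) (sq_nonneg _)

theorem memLp_vthWeighted {F : ℝ × ℝ → ℝ} (hF : AEStronglyMeasurable F) {B : ℝ}
    (hB : ∀ z, |F z| ≤ B) {t : ℝ} (ht : 0 < t) (p q : ℝ) : MemLp (vthWeighted F t p q) 2 := by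
  have hmeas : AEStronglyMeasurable (vthWeighted F t p q) := by
    refine hF.mul (Measurable.aestronglyMeasurable ?_)
    unfold vthKernel
    fun_prop
  refine (memLp_two_iff_integrable_sq hmeas).2 <|
    (integrable_sq_mul_thetaKernel hF hB p q ht.ne').mono' (hmeas.pow 2) (ae_of_all _ fun z => ?_)
  rw [Real.norm_of_nonneg (sq_nonneg _)]
  exact vthWeighted_sq_le F ht.le p q z

theorem sqrt_integral_vthWeighted_sq_le_Msize {F : ℝ × ℝ → ℝ} (hF : AEStronglyMeasurable F)
    {B : ℝ} (hB : ∀ z, |F z| ≤ B) {C : Set (ℤ × ℤ × ℤ)} {p q t : ℝ}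
    (hw : ((p, q), t) ∈ Omega C) : √(∫ z, vthWeighted F t p q z ^ 2) ≤ Msize F C := by
  have ht := pos_of_mem_Omega hw
  refine le_trans (Real.sqrt_le_sqrt ?_) (sqrt_convTheta_le_Msize hB hw)
  exact integral_mono_of_nonneg (ae_of_all _ fun z => sq_nonneg _)
    (integrable_sq_mul_thetaKernel hF hB p q ht.ne') (ae_of_all _ (vthWeighted_sq_le F ht.le p q))

theorem sqrt_mul_sqrt_mul_sqrt_mul_sqrt {a b c d : ℝ} (ha : 0 ≤ a) (hb : 0 ≤ b) (hc : 0 ≤ c)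
    (hd : 0 ≤ d) : √(a * b) * √(c * b) * √(c * d) * √(a * d) = a * b * c * d := by
  rw [Real.sqrt_mul ha, Real.sqrt_mul hc, Real.sqrt_mul hc, Real.sqrt_mul ha]
  calc _ = (√a * √a) * (√b * √b) * (√c * √c) * (√d * √d) := by ring
    _ = _ := by rw [Real.mul_self_sqrt ha, Real.mul_self_sqrt hb, Real.mul_self_sqrt hc,
      Real.mul_self_sqrt hd]

theorem entConv_vth_eq_integral_box (F₁ F₂ F₃ F₄ : ℝ × ℝ → ℝ) {t : ℝ} (ht : 0 ≤ t) (p q : ℝ) :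
    entConv F₁ F₂ F₃ F₄ vth vth vth vth t p q =
      ∫ x, ∫ y, ∫ x', ∫ y', vthWeighted F₁ t p q (x, y) * vthWeighted F₂ t p q (x', y) *
        vthWeighted F₃ t p q (x', y') * vthWeighted F₄ t p q (x, y') := by
  simp only [entConv, vthWeighted]
  congr! 8 with x y x' y'
  have h := sqrt_mul_sqrt_mul_sqrt_mul_sqrt (vthKernel_nonneg ht p x) (vthKernel_nonneg ht q y)
    (vthKernel_nonneg ht p x') (vthKernel_nonneg ht q y')
  simp only [vthKernel] at h ⊢
  linear_combination (-(F₁ (x, y) * F₂ (x', y) * F₃ (x', y') * F₄ (x, y'))) * h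

/-- Lemma 2.2: the Gowers box-type bound for the entangled convolution with `ϑ⊗ϑ⊗ϑ⊗ϑ`. -/
theorem entConv_le_Msize (F1 F2 F3 F4 : ℝ × ℝ → ℝ)
    (h1 : Nice F1) (h2 : Nice F2) (h3 : Nice F3) (h4 : Nice F4)
    (C : Set (ℤ × ℤ × ℤ)) (p q t : ℝ) (hw : ((p, q), t) ∈ Omega C) :
    entConv F1 F2 F3 F4 vth vth vth vth t p q ≤
      Msize F1 C * Msize F2 C * Msize F3 C * Msize F4 C := by
  have ht := pos_of_mem_Omega hw
  have memLp {F : ℝ × ℝ → ℝ} : Nice F → MemLp (vthWeighted F t p q) 2 (volume.prod volume) :=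
    fun ⟨hm, ⟨_, hB⟩, _⟩ => memLp_vthWeighted hm.aestronglyMeasurable hB ht p q
  have bound {F : ℝ × ℝ → ℝ} : Nice F → √(∫ z, vthWeighted F t p q z ^ 2) ≤ Msize F C :=
    fun ⟨hm, ⟨_, hB⟩, _⟩ => sqrt_integral_vthWeighted_sq_le_Msize hm.aestronglyMeasurable hB hw
  have hM (F : ℝ × ℝ → ℝ) : 0 ≤ Msize F C := Msize_nonneg F C
  rw [entConv_vth_eq_integral_box F1 F2 F3 F4 ht.le]
  refine (integral_box_le (memLp h1) (memLp h2) (memLp h3) (memLp h4)).trans ?_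
  rw [← Measure.volume_eq_prod]
  gcongr
  exacts [mul_nonneg (mul_nonneg (hM F1) (hM F2)) (hM F3), mul_nonneg (hM F1) (hM F2), hM F1,
    bound h1, bound h2, bound h3, bound h4]

end
end

section
/- Let ρ, σ be real-valued Schwartz functions on ℝ satisfying −t ∂_t |ρ̂(tτ)|² = |σ̂(tτ)|² for all t > 0 and all τ ∈ ℝ. Then for all t > 0 and all x, x' ∈ ℝ, −t ∂_t ∫_ℝ [ρ]_t(p−x) [ρ]_t(p−x') dp = ∫_ℝ [σ]_t(p−x) [σ]_t(p−x') dp. -/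
/-!
By Plancherel, and because the Fourier transform of `p ↦ s⁻¹ ρ((p - a)/s)` is
`τ ↦ e^{-2πiaτ} ρ̂(sτ)`, the correlation of `[ρ]_s(· - x)` and `[ρ]_s(· - x')` equals
`∫ |ρ̂(sτ)|² cos(2π(x - x')τ) dτ`. Differentiating under the integral sign, which the uniform decay
`|σ̂(sτ)|² ≤ C (1 + (tτ/2)²)⁻¹` for `s > t/2` justifies, turns the hypothesis into the claim, by the
same identity for `σ`.
-/

open MeasureTheory Real
open scoped FourierTransform ComplexInnerProductSpace SchwartzMap

noncomputable section

section Dilation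

variable {E : Type*} [NormedAddCommGroup E] [NormedSpace ℂ E]

theorem Real.fourier_dilate_sub (f : ℝ → E) {s : ℝ} (hs : 0 < s) (a ξ : ℝ) :
    𝓕 (fun p => s⁻¹ • f ((p - a) / s)) ξ = 𝐞 (-(a * ξ)) • 𝓕 f (s * ξ) := by
  set G : ℝ → E := fun w => 𝐞 (-((s * w + a) * ξ)) • s⁻¹ • f w
  have hG : ∀ p, 𝐞 (-(p * ξ)) • s⁻¹ • f ((p - a) / s) = G ((p - a) / s) := by
    intro p
    simp only [G]
    rw [mul_div_cancel₀ _ hs.ne', sub_add_cancel]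
  rw [fourier_real_eq, fourier_real_eq]
  simp_rw [hG]
  rw [integral_sub_right_eq_self (fun p => G (p / s)), Measure.integral_comp_div G s,
    abs_of_pos hs, ← integral_smul, Circle.smul_def, ← integral_smul]
  congr 1 with w
  have : -((s * w + a) * ξ) = -(a * ξ) + -(w * (s * ξ)) := by ring
  simp only [G, this, AddChar.map_add_eq_mul, smul_comm s, Circle.smul_def, Circle.coe_mul,
    mul_smul, inv_smul_smul₀ hs.ne']

/-- The Schwartz function `[f]_s(· - a)`. -/
def SchwartzMap.dilate (f : 𝓢(ℝ, E)) {s : ℝ} (hs : s ≠ 0) (a : ℝ) : 𝓢(ℝ, E) :=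
  s⁻¹ • compSubConstCLM ℝ a (compCLMOfContinuousLinearEquiv ℝ
    (ContinuousLinearEquiv.unitsEquivAut ℝ (Units.mk0 s⁻¹ (inv_ne_zero hs))) f)

@[simp]
theorem SchwartzMap.coe_dilate (f : 𝓢(ℝ, E)) {s : ℝ} (hs : s ≠ 0) (a : ℝ) :
    ⇑(f.dilate hs a) = fun p => s⁻¹ • f ((p - a) / s) := by
  ext p
  simp [SchwartzMap.dilate, div_eq_mul_inv]

end Dilation

section Decay

variable {E : Type*} [NormedAddCommGroup E] [NormedSpace ℝ E]

theorem SchwartzMap.exists_sq_norm_le (φ : 𝓢(ℝ, E)) :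
    ∃ C, ∀ u : ℝ, ‖φ u‖ ^ 2 ≤ C * (1 + u ^ 2)⁻¹ := by
  obtain ⟨C₀, -, hC₀⟩ := φ.decay 0 0
  obtain ⟨C₁, -, hC₁⟩ := φ.decay 1 0
  refine ⟨(C₀ + C₁) ^ 2, fun u => ?_⟩
  have hdecay : (1 + |u|) * ‖φ u‖ ≤ C₀ + C₁ := by
    have h₀ := hC₀ u
    have h₁ := hC₁ u
    simp only [pow_zero, pow_one, one_mul, norm_iteratedFDeriv_zero, Real.norm_eq_abs] at h₀ h₁
    linarith
  rw [← div_eq_mul_inv, le_div_iff₀ (by positivity)]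
  calc ‖φ u‖ ^ 2 * (1 + u ^ 2) ≤ ((1 + |u|) * ‖φ u‖) ^ 2 := by
        nlinarith [abs_nonneg u, sq_abs u, sq_nonneg ‖φ u‖]
    _ ≤ (C₀ + C₁) ^ 2 := by gcongr

theorem SchwartzMap.exists_sq_norm_comp_mul_le (φ : 𝓢(ℝ, E)) :
    ∃ C, ∀ {c s : ℝ}, |c| ≤ |s| → ∀ τ, ‖φ (s * τ)‖ ^ 2 ≤ C * (1 + (c * τ) ^ 2)⁻¹ := by
  obtain ⟨C, hC⟩ := φ.exists_sq_norm_le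
  have hC₀ : 0 ≤ C := by simpa using (sq_nonneg _).trans (hC 0)
  refine ⟨C, fun {c s} hcs τ => (hC _).trans ?_⟩
  have hsq : (c * τ) ^ 2 ≤ (s * τ) ^ 2 := by
    rw [sq_le_sq, abs_mul, abs_mul]
    gcongr
  gcongr

theorem integrable_inv_one_add_sq_comp_mul {c : ℝ} (hc : c ≠ 0) :
    Integrable fun τ : ℝ => (1 + (c * τ) ^ 2)⁻¹ :=
  integrable_inv_one_add_sq.comp_mul_left' hc

theorem SchwartzMap.integrable_sq_norm_comp_mul (φ : 𝓢(ℝ, E)) {s : ℝ} (hs : s ≠ 0) :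
    Integrable fun τ => ‖φ (s * τ)‖ ^ 2 := by
  obtain ⟨C, hC⟩ := φ.exists_sq_norm_comp_mul_le
  refine ((integrable_inv_one_add_sq_comp_mul hs).const_mul C).mono'
    ((φ.continuous.comp (continuous_const_mul s)).norm.pow 2).aestronglyMeasurable
    (.of_forall fun τ => ?_)
  rw [Real.norm_of_nonneg (by positivity)]
  exact hC le_rfl τ

end Decay

section Correlation

variable {H : Type*} [NormedAddCommGroup H] [InnerProductSpace ℂ H] [CompleteSpace H]

theorem SchwartzMap.integral_inner_dilate (u : 𝓢(ℝ, H)) {s : ℝ} (hs : 0 < s) (x x' : ℝ) :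
    ∫ p, ⟪s⁻¹ • u ((p - x) / s), s⁻¹ • u ((p - x') / s)⟫ =
      ∫ ξ, (𝐞 ((x - x') * ξ) : ℂ) * (‖𝓕 (u : ℝ → H) (s * ξ)‖ ^ 2 : ℝ) := by
  have hphase : ∀ ξ, (𝐞 (-(x' * ξ)) : ℂ) * starRingEnd ℂ (𝐞 (-(x * ξ))) = 𝐞 ((x - x') * ξ) := by
    intro ξ
    rw [← Circle.coe_inv_eq_conj, ← Circle.coe_mul, ← AddChar.map_neg_eq_inv,
      ← AddChar.map_add_eq_mul]
    ring_nf
  calc ∫ p, ⟪s⁻¹ • u ((p - x) / s), s⁻¹ • u ((p - x') / s)⟫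
      = ∫ p, ⟪u.dilate hs.ne' x p, u.dilate hs.ne' x' p⟫ := by simp only [coe_dilate]
    _ = ∫ ξ, ⟪𝓕 (u.dilate hs.ne' x) ξ, 𝓕 (u.dilate hs.ne' x') ξ⟫ :=
        (integral_inner_fourier_fourier _ _).symm
    _ = _ := by
        congr 1 with ξ
        simp only [fourier_coe, coe_dilate, Real.fourier_dilate_sub _ hs, Circle.smul_def,
          inner_smul_left, inner_smul_right, inner_self_eq_norm_sq_to_K, ← mul_assoc]
        rw [hphase, Complex.ofReal_pow]
        rfl

theorem SchwartzMap.integral_dilate_mul_dilate (ρ : 𝓢(ℝ, ℝ)) {s : ℝ} (hs : 0 < s) (x x' : ℝ) :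
    ∫ p, (s⁻¹ * ρ ((p - x) / s)) * (s⁻¹ * ρ ((p - x') / s)) =
      ∫ ξ, ‖𝓕 (fun y => (ρ y : ℂ)) (s * ξ)‖ ^ 2 * Real.cos (2 * π * (x - x') * ξ) := by
  set u : 𝓢(ℝ, ℂ) := ρ.postcompCLM (𝕜 := ℝ) Complex.ofRealCLM
  have hint : Integrable fun ξ => (𝐞 ((x - x') * ξ) : ℂ) * (‖𝓕 (u : ℝ → ℂ) (s * ξ)‖ ^ 2 : ℝ) :=
    ((𝓕 u).integrable_sq_norm_comp_mul hs.ne').ofReal.bdd_mul (c := 1)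
      (by fun_prop) (.of_forall fun ξ => (Circle.norm_coe _).le)
  have hreal : ∀ p, ⟪s⁻¹ • u ((p - x) / s), s⁻¹ • u ((p - x') / s)⟫ =
      (((s⁻¹ * ρ ((p - x) / s)) * (s⁻¹ * ρ ((p - x') / s)) : ℝ) : ℂ) := by
    intro p
    simp [u]
    ring
  calc ∫ p, (s⁻¹ * ρ ((p - x) / s)) * (s⁻¹ * ρ ((p - x') / s))
      = (∫ p, ⟪s⁻¹ • u ((p - x) / s), s⁻¹ • u ((p - x') / s)⟫).re := by
        simp only [hreal, integral_complex_ofReal, Complex.ofReal_re]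
    _ = ∫ ξ, ((𝐞 ((x - x') * ξ) : ℂ) * (‖𝓕 (u : ℝ → ℂ) (s * ξ)‖ ^ 2 : ℝ)).re := by
        rw [u.integral_inner_dilate hs x x']
        exact (integral_re hint).symm
    _ = _ := by
        congr 1 with ξ
        rw [Complex.re_mul_ofReal, Real.fourierChar_apply, Complex.exp_ofReal_mul_I_re, mul_comm]
        congr 2
        ring

end Correlation

section Derivative

variable {E : Type*} [NormedAddCommGroup E] [NormedSpace ℝ E]

theorem hasDerivAt_integral_sq_norm_comp_mul_mul (φ ψ : 𝓢(ℝ, E)) {w : ℝ → ℝ} {M : ℝ}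
    (hw : AEStronglyMeasurable w) (hwM : ∀ τ, |w τ| ≤ M)
    (h : ∀ τ s, 0 < s → HasDerivAt (fun s => ‖φ (s * τ)‖ ^ 2) (-‖ψ (s * τ)‖ ^ 2 / s) s)
    {t : ℝ} (ht : 0 < t) :
    HasDerivAt (fun s => ∫ τ, ‖φ (s * τ)‖ ^ 2 * w τ) (-(∫ τ, ‖ψ (t * τ)‖ ^ 2 * w τ) / t) t := by
  have ht₂ : 0 < t / 2 := half_pos ht
  have hcont : ∀ (χ : 𝓢(ℝ, E)) (s : ℝ), Continuous fun τ => ‖χ (s * τ)‖ ^ 2 :=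
    fun χ s => (χ.continuous.comp (continuous_const_mul s)).norm.pow 2
  obtain ⟨C, hC⟩ := ψ.exists_sq_norm_comp_mul_le
  have hbound : ∀ τ, ∀ s ∈ Set.Ioi (t / 2),
      ‖-‖ψ (s * τ)‖ ^ 2 / s * w τ‖ ≤ C * (1 + (t / 2 * τ) ^ 2)⁻¹ / (t / 2) * M := by
    intro τ s (hs : t / 2 < s)
    have hψ := hC (c := t / 2) (s := s)
      (by rw [abs_of_pos ht₂, abs_of_pos (ht₂.trans hs)]; exact hs.le) τ
    rw [norm_mul, norm_div, norm_neg, norm_pow, norm_norm, Real.norm_eq_abs, Real.norm_eq_abs,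
      abs_of_pos (ht₂.trans hs)]
    have hC₀ : 0 ≤ C * (1 + (t / 2 * τ) ^ 2)⁻¹ := (sq_nonneg _).trans hψ
    exact mul_le_mul (div_le_div₀ hC₀ hψ ht₂ hs.le) (hwM τ) (abs_nonneg _)
      (div_nonneg hC₀ ht₂.le)
  obtain ⟨-, hderiv⟩ := hasDerivAt_integral_of_dominated_loc_of_deriv_le
    (F := fun s τ => ‖φ (s * τ)‖ ^ 2 * w τ) (F' := fun s τ => -‖ψ (s * τ)‖ ^ 2 / s * w τ)
    (Ioi_mem_nhds (half_lt_self ht))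
    (.of_forall fun s => (hcont φ s).aestronglyMeasurable.mul hw)
    ((φ.integrable_sq_norm_comp_mul ht.ne').mul_bdd hw (.of_forall fun τ => hwM τ))
    (((hcont ψ t).neg.div_const t).aestronglyMeasurable.mul hw) (.of_forall hbound)
    ((((integrable_inv_one_add_sq_comp_mul ht₂.ne').const_mul C).div_const _).mul_const M)
    (.of_forall fun τ s hs => (h τ s (ht₂.trans hs)).mul_const (w τ))
  have hvalue : ∫ τ, -‖ψ (t * τ)‖ ^ 2 / t * w τ = -(∫ τ, ‖ψ (t * τ)‖ ^ 2 * w τ) / t := by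
    simp_rw [neg_div, neg_mul, div_mul_eq_mul_div]
    rw [integral_neg, integral_div]
  exact hvalue ▸ hderiv

end Derivative

/-- If `-t ∂_t |ρ̂(tτ)|² = |σ̂(tτ)|²` for all `t > 0`, `τ ∈ ℝ`, then
`-t ∂_t ∫ [ρ]_t(p-x) [ρ]_t(p-x') dp = ∫ [σ]_t(p-x) [σ]_t(p-x') dp`. -/
theorem deriv_dilated_correlation (ρ σ : SchwartzMap ℝ ℝ)
    (h : ∀ (τ t : ℝ), 0 < t →
      HasDerivAt (fun s : ℝ => ‖𝓕 (fun x => (ρ x : ℂ)) (s * τ)‖^2)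
        (-(‖𝓕 (fun x => (σ x : ℂ)) (t * τ)‖^2) / t) t)
    (t : ℝ) (ht : 0 < t) (x x' : ℝ) :
    HasDerivAt (fun s : ℝ => ∫ p : ℝ, (s⁻¹ * ρ ((p - x)/s)) * (s⁻¹ * ρ ((p - x')/s)))
      (-(∫ p : ℝ, (t⁻¹ * σ ((p - x)/t)) * (t⁻¹ * σ ((p - x')/t))) / t) t := by
  have hfourier : HasDerivAt
      (fun s => ∫ τ, ‖𝓕 (fun y => (ρ y : ℂ)) (s * τ)‖ ^ 2 * Real.cos (2 * π * (x - x') * τ))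
      (-(∫ τ, ‖𝓕 (fun y => (σ y : ℂ)) (t * τ)‖ ^ 2 * Real.cos (2 * π * (x - x') * τ)) / t) t :=
    hasDerivAt_integral_sq_norm_comp_mul_mul
      (𝓕 (ρ.postcompCLM (𝕜 := ℝ) Complex.ofRealCLM)) (𝓕 (σ.postcompCLM (𝕜 := ℝ) Complex.ofRealCLM))
      (by fun_prop : Continuous fun τ => Real.cos (2 * π * (x - x') * τ)).aestronglyMeasurable
      (fun τ => Real.abs_cos_le_one _) h ht
  rw [← σ.integral_dilate_mul_dilate ht] at hfourier
  exact hfourier.congr_of_eventuallyEq <| (eventually_gt_nhds ht).mono fun s hs =>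
    ρ.integral_dilate_mul_dilate hs x x'
end
end
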